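/- arXiv:2601.09419 — 5 statements merged into one kernel-verified Lean document; each statement's English description precedes it below -/
import Mathlib

section
/- For every prime p and every integer m, there exists a positive non-square integer D such that the continued fraction expansion of √D has a period of length 2 (i.e., √D = [a₀; \overline{a₁, 2a₀}] for some positive integers a₀, a₁) and D ≡ m (mod p). -/
/-- Iterated Gauss map: `gaussIter x n` is the `n`-th complete quotient of the
continued fraction expansion of `x`. -/
noncomputable def gaussIter (x : ℝ) : ℕ → ℝ
  | 0 => x
  | n + 1 => (gaussIter x n - ⌊gaussIter x n⌋)⁻¹

/-- `cfCoeff x n` is the `n`-th partial quotient of the continued fraction of `x`. -/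
noncomputable def cfCoeff (x : ℝ) (n : ℕ) : ℤ := ⌊gaussIter x n⌋

/-- `IsPeriodicCF x k a` says that the continued fraction expansion of `x` is
`[a 0; a 1, …, a k, a 1, …, a k, …]`, i.e. `x = [a 0; \overline{a 1, …, a k}]`,
where the partial quotients `a 1, …, a k` are positive and `a k = 2 * a 0`. -/
def IsPeriodicCF (x : ℝ) (k : ℕ) (a : ℕ → ℤ) : Prop :=
  0 < a 0 ∧ (∀ i : ℕ, 1 ≤ i → i ≤ k → 0 < a i) ∧ a k = 2 * a 0 ∧
    cfCoeff x 0 = a 0 ∧ ∀ n : ℕ, 1 ≤ n → cfCoeff x n = a ((n - 1) % k + 1)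

lemma aux_periodic (a c b : ℕ) (ha : 1 ≤ a) (hc : 1 ≤ c) (hb : 2 * a = c * b) :
    IsPeriodicCF (Real.sqrt ((a : ℝ) ^ 2 + (c : ℝ))) 2
      (fun n => if n = 0 then (a : ℤ) else if n = 1 then (b : ℤ) else 2 * (a : ℤ)) := by
  have hb1 : 1 ≤ b := by
    rcases Nat.eq_zero_or_pos b with h | h
    · subst h; simp at hb; omega
    · exact h
  have ha1 : (1 : ℝ) ≤ (a : ℝ) := by exact_mod_cast ha
  have hc1 : (1 : ℝ) ≤ (c : ℝ) := by exact_mod_cast hc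
  have hb1' : (1 : ℝ) ≤ (b : ℝ) := by exact_mod_cast hb1
  have hc0 : (0 : ℝ) < (c : ℝ) := by linarith
  have h2ab : 2 * (a : ℝ) = (c : ℝ) * (b : ℝ) := by exact_mod_cast hb
  set x := Real.sqrt ((a : ℝ) ^ 2 + (c : ℝ)) with hxdef
  have hx0 : 0 ≤ x := Real.sqrt_nonneg _
  have hxsq : x ^ 2 = (a : ℝ) ^ 2 + (c : ℝ) := Real.sq_sqrt (by positivity)
  have hxlow : (a : ℝ) < x := by nlinarith [sq_nonneg (x - a), sq_nonneg (x + a)]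
  have hxhigh : x < (a : ℝ) + 1 := by
    nlinarith [sq_nonneg (x - a - 1), sq_nonneg (x + a + 1)]
  have hxA : 0 < x - (a : ℝ) := by linarith
  have hprod : (x - (a : ℝ)) * (x + (a : ℝ)) = (c : ℝ) := by nlinarith [hxsq]
  have hfx : ⌊x⌋ = (a : ℤ) := by
    rw [Int.floor_eq_iff]
    constructor <;> push_cast <;> linarith
  have hinv : (x - (a : ℝ))⁻¹ = (x + (a : ℝ)) / (c : ℝ) := by
    rw [eq_div_iff (ne_of_gt hc0), ← hprod, ← mul_assoc,
      inv_mul_cancel₀ (ne_of_gt hxA), one_mul]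
  have hfg1 : ⌊(x + (a : ℝ)) / (c : ℝ)⌋ = (b : ℤ) := by
    rw [Int.floor_eq_iff]
    constructor
    · rw [le_div_iff₀ hc0]; push_cast; nlinarith
    · rw [div_lt_iff₀ hc0]; push_cast; nlinarith
  have hfg2 : ⌊x + (a : ℝ)⌋ = 2 * (a : ℤ) := by
    rw [Int.floor_eq_iff]
    constructor <;> push_cast <;> linarith
  have hstep1 : ((x + (a : ℝ)) / (c : ℝ) - ((b : ℤ) : ℝ))⁻¹ = x + (a : ℝ) := by
    have h1 : (x + (a : ℝ)) / (c : ℝ) - ((b : ℤ) : ℝ) = (x - (a : ℝ)) / (c : ℝ) := by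
      push_cast
      field_simp
      linarith
    rw [h1, inv_div, div_eq_iff (ne_of_gt hxA)]
    linarith [hprod]
  have hstep2 : (x + (a : ℝ) - ((2 * (a : ℤ) : ℤ) : ℝ))⁻¹ = (x + (a : ℝ)) / (c : ℝ) := by
    have h1 : x + (a : ℝ) - ((2 * (a : ℤ) : ℤ) : ℝ) = x - (a : ℝ) := by push_cast; ring
    rw [h1, hinv]
  have egen : ∀ k : ℕ, gaussIter x (k + 1) = (gaussIter x k - (⌊gaussIter x k⌋ : ℝ))⁻¹ :=
    fun _ => rfl
  have hg1 : gaussIter x 1 = (x + (a : ℝ)) / (c : ℝ) := by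
    have e0 : gaussIter x 0 = x := rfl
    rw [egen 0, e0, hfx]
    push_cast
    exact hinv
  have hg2 : gaussIter x 2 = x + (a : ℝ) := by
    rw [egen 1, hg1, hfg1, hstep1]
  have hpat : ∀ k : ℕ, gaussIter x (2 * k + 1) = (x + (a : ℝ)) / (c : ℝ) ∧
      gaussIter x (2 * k + 2) = x + (a : ℝ) := by
    intro k
    induction k with
    | zero => exact ⟨hg1, hg2⟩
    | succ n ih =>
      have hidx1 : 2 * (n + 1) + 1 = (2 * n + 2) + 1 := by ring
      have h1 : gaussIter x (2 * (n + 1) + 1) = (x + (a : ℝ)) / (c : ℝ) := by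
        rw [hidx1, egen (2 * n + 2), ih.2, hfg2, hstep2]
      have hidx2 : 2 * (n + 1) + 2 = (2 * (n + 1) + 1) + 1 := by ring
      have h2 : gaussIter x (2 * (n + 1) + 2) = x + (a : ℝ) := by
        rw [hidx2, egen (2 * (n + 1) + 1), h1, hfg1, hstep1]
      exact ⟨h1, h2⟩
  refine ⟨?_, ?_, ?_, ?_, ?_⟩
  · simp only [if_pos rfl]
    exact_mod_cast ha
  · intro i hi1 hi2
    interval_cases i
    · norm_num
      exact_mod_cast hb1
    · norm_num
      exact_mod_cast ha
  · norm_num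
  · show ⌊gaussIter x 0⌋ = _
    have e0 : gaussIter x 0 = x := rfl
    rw [e0, hfx]
    norm_num
  · intro n hn
    rcases Nat.even_or_odd n with ⟨k, hk⟩ | ⟨k, hk⟩
    · have hn2 : n = 2 * (k - 1) + 2 := by omega
      have hmod : (n - 1) % 2 + 1 = 2 := by omega
      rw [hmod, hn2]
      show ⌊gaussIter x (2 * (k - 1) + 2)⌋ = _
      rw [(hpat (k - 1)).2, hfg2]
      norm_num
    · have hmod : (n - 1) % 2 + 1 = 1 := by omega
      rw [hmod, hk]
      show ⌊gaussIter x (2 * k + 1)⌋ = _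
      rw [(hpat k).1, hfg1]
      norm_num

/-- For every prime `p` and integer `m` there is a positive non-square `D` whose
square root has a continued fraction with period of length 2 and `D ≡ m (mod p)`. -/
theorem exists_sqrt_cf_period_two_mod (p : ℕ) (hp : p.Prime) (m : ℤ) :
    ∃ D : ℕ, 0 < D ∧ ¬ IsSquare D ∧
      (∃ a₀ a₁ : ℤ, IsPeriodicCF (Real.sqrt D) 2
        (fun n => if n = 0 then a₀ else if n = 1 then a₁ else 2 * a₀)) ∧
      (D : ℤ) ≡ m [ZMOD (p : ℤ)] := by
  have hp0 : 0 < p := hp.pos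
  have hpz : ((p : ℤ)) ≠ 0 := by exact_mod_cast hp0.ne'
  set e := (m - 1) % (p : ℤ) with hedef
  set q := (m - 1) / (p : ℤ) with hqdef
  have hemod : 0 ≤ e := Int.emod_nonneg _ hpz
  have hmeq : m = (p : ℤ) * q + e + 1 := by
    have h := Int.mul_ediv_add_emod (m - 1) (p : ℤ)
    linarith
  set c : ℕ := e.toNat + 1 with hcdef
  have hcz : (c : ℤ) = e + 1 := by
    rw [hcdef]; push_cast [Int.toNat_of_nonneg hemod]; ring
  have hc1 : 1 ≤ c := by rw [hcdef]; omega
  set a : ℕ := c * p with hadef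
  have ha1 : 1 ≤ a := by
    rw [hadef]
    exact Nat.one_le_iff_ne_zero.mpr (Nat.mul_ne_zero (by omega) hp0.ne')
  have hc2a : c ≤ 2 * a := by
    rw [hadef]
    have h1 : c * 1 ≤ c * p := Nat.mul_le_mul_left c hp0
    nlinarith
  refine ⟨a ^ 2 + c, by positivity, ?_, ?_, ?_⟩
  · rintro ⟨r, hr⟩
    have h1 : a < r := by nlinarith
    have h2 : r < a + 1 := by nlinarith
    omega
  · refine ⟨(a : ℤ), ((2 * p : ℕ) : ℤ), ?_⟩
    have hb : 2 * a = c * (2 * p) := by rw [hadef]; ring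
    have hcast : ((a ^ 2 + c : ℕ) : ℝ) = (a : ℝ) ^ 2 + (c : ℝ) := by push_cast; ring
    rw [hcast]
    exact aux_periodic a c (2 * p) ha1 hc1 hb
  · have hD : ((a ^ 2 + c : ℕ) : ℤ) = ((c : ℤ) * p) ^ 2 + c := by
      rw [hadef]; push_cast; ring
    rw [hD, hcz]
    exact Int.modEq_iff_dvd.mpr ⟨q - (e + 1) ^ 2 * p, by rw [hmeq]; ring⟩
end

section
/- Let D be a positive non-square integer such that the continued fraction expansion of √D has a period of length 3 (i.e., √D = [a₀; \overline{a₁, a₂, a₃}] with a₃ = 2a₀ and a₂ = a₁). Then D is not divisible by any prime p with p ≡ 3 (mod 4). -/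
/-! The complete quotients `t₁, t₂, t₃` of `√D` satisfy `√D = a₀ + 1/t₁`, `t₁ = a₁ + 1/t₂`,
`t₂ = a₁ + 1/t₃` and `t₃ = 2a₀ + 1/t₁`; the last holds because an irrational number is
determined by its partial quotients (it is the limit of its convergents), so the fourth complete
quotient equals the first. Thus `t₃ = a₀ + √D`, and eliminating `t₁, t₂` gives
`(a₁² + 1) D = (a₀a₁ + 1)² + a₀²`. If a prime `p ≡ 3 (mod 4)` divided `D`, then `-1` not being a
square mod `p` would force `p ∣ a₀` and `p ∣ a₀a₁ + 1`. -/

open GenContFract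

lemma gaussIter_add (x : ℝ) (k n : ℕ) : gaussIter x (k + n) = gaussIter (gaussIter x k) n := by
  induction n with
  | zero => rfl
  | succ n ih => rw [← add_assoc, gaussIter, gaussIter, ih]

lemma cfCoeff_add (x : ℝ) (k n : ℕ) : cfCoeff x (k + n) = cfCoeff (gaussIter x k) n := by
  rw [cfCoeff, cfCoeff, gaussIter_add]

lemma Irrational.gaussIter {x : ℝ} (hx : Irrational x) : ∀ n, Irrational (gaussIter x n)
  | 0 => hx
  | n + 1 => ((hx.gaussIter n).sub_intCast _).inv

lemma gaussIter_one (x : ℝ) : gaussIter x 1 = (Int.fract x)⁻¹ := rfl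

lemma sub_cfCoeff_mul_gaussIter_succ {x : ℝ} (hx : Irrational x) (n : ℕ) :
    (gaussIter x n - cfCoeff x n) * gaussIter x (n + 1) = 1 :=
  mul_inv_cancel₀ (sub_ne_zero.2 ((hx.gaussIter n).ne_int _))

lemma GenContFract.of_s_get?_eq_of_cfCoeff_eq (n : ℕ) {x y : ℝ} (hx : Irrational x)
    (hy : Irrational y) (h : ∀ m, cfCoeff x m = cfCoeff y m) :
    (GenContFract.of x).s.get? n = (GenContFract.of y).s.get? n := by
  induction n generalizing x y with
  | zero =>
    have hxy := h 1
    simp only [cfCoeff, gaussIter_one] at hxy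
    change (GenContFract.of x).s.head = (GenContFract.of y).s.head
    rw [of_s_head (sub_ne_zero.2 (hx.ne_int _)),
      of_s_head (sub_ne_zero.2 (hy.ne_int _)), hxy]
  | succ n ih =>
    rw [of_s_succ, of_s_succ, ← gaussIter_one, ← gaussIter_one]
    exact ih (hx.gaussIter 1) (hy.gaussIter 1) fun m => by rw [← cfCoeff_add, ← cfCoeff_add, h]

lemma eq_of_cfCoeff_eq {x y : ℝ} (hx : Irrational x) (hy : Irrational y)
    (h : ∀ n, cfCoeff x n = cfCoeff y n) : x = y := by
  have hof : GenContFract.of x = GenContFract.of y := by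
    ext1
    · rw [of_h_eq_floor, of_h_eq_floor]; exact congrArg Int.cast (h 0)
    · exact Stream'.Seq.ext fun n => of_s_get?_eq_of_cfCoeff_eq n hx hy h
  exact tendsto_nhds_unique (of_convergence x) (hof ▸ of_convergence y)

lemma IsPeriodicCF.gaussIter_succ_eq {x : ℝ} {k : ℕ} {a : ℕ → ℤ} (h : IsPeriodicCF x k a)
    (hx : Irrational x) : gaussIter x (k + 1) = gaussIter x 1 := by
  refine eq_of_cfCoeff_eq (hx.gaussIter _) (hx.gaussIter 1) fun n => ?_
  rw [← cfCoeff_add, ← cfCoeff_add, h.2.2.2.2 _ (by omega), h.2.2.2.2 _ (by omega)]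
  congr 2
  simp [show k + 1 + n - 1 = n + k by omega]

lemma sq_eq_of_period_three {K : Type*} [Field K] {u t₁ t₂ t₃ a₀ a₁ : K}
    (h₀ : (u - a₀) * t₁ = 1) (h₁ : (t₁ - a₁) * t₂ = 1) (h₂ : (t₂ - a₁) * t₃ = 1)
    (h₃ : (t₃ - 2 * a₀) * t₁ = 1) :
    (a₁ ^ 2 + 1) * u ^ 2 = (a₀ * a₁ + 1) ^ 2 + a₀ ^ 2 := by
  obtain rfl : t₃ = a₀ + u :=
    mul_right_cancel₀ (right_ne_zero_of_mul_eq_one h₀) (by linear_combination h₃ - h₀)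
  linear_combination (a₀ - u) * ((a₀ + u) * h₁ - (t₁ - a₁) * h₂) + (1 + a₁ * (a₀ + u)) * h₀

lemma IsPeriodicCF.sq_add_one_mul_sq_eq {x : ℝ} {a₀ a₁ : ℤ}
    (h : IsPeriodicCF x 3 (fun n => if n = 0 then a₀ else if n ≤ 2 then a₁ else 2 * a₀))
    (hx : Irrational x) : (a₁ ^ 2 + 1) * x ^ 2 = (a₀ * a₁ + 1) ^ 2 + a₀ ^ 2 := by
  have hper := h.gaussIter_succ_eq hx
  obtain ⟨-, -, -, hc₀, hc⟩ := h
  replace hc₀ : cfCoeff x 0 = a₀ := hc₀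
  have hc₁ : cfCoeff x 1 = a₁ := hc 1 le_rfl
  have hc₂ : cfCoeff x 2 = a₁ := hc 2 (by norm_num)
  have hc₃ : cfCoeff x 3 = 2 * a₀ := hc 3 (by norm_num)
  have h₀ := sub_cfCoeff_mul_gaussIter_succ hx 0
  have h₁ := sub_cfCoeff_mul_gaussIter_succ hx 1
  have h₂ := sub_cfCoeff_mul_gaussIter_succ hx 2
  have h₃ := sub_cfCoeff_mul_gaussIter_succ hx 3
  simp only [gaussIter.eq_1, zero_add, hc₀, hc₁, hc₂, hc₃, hper, Int.cast_mul, Int.cast_ofNat] at h₀ h₁ h₂ h₃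
  exact sq_eq_of_period_three h₀ h₁ h₂ h₃

lemma ZMod.eq_zero_of_sq_add_sq_eq_zero {p : ℕ} [Fact p.Prime] (hp : p % 4 = 3) {x y : ZMod p}
    (h : x ^ 2 + y ^ 2 = 0) : x = 0 := by
  by_contra hx
  exact ZMod.mod_four_ne_three_of_sq_eq_neg_sq hx (eq_neg_of_add_eq_zero_left h) hp

lemma Nat.Prime.not_dvd_of_mul_eq_sq_add_sq {p : ℕ} (hp : p.Prime) (hp4 : p % 4 = 3)
    {a c D : ℤ} (h : (c ^ 2 + 1) * D = (a * c + 1) ^ 2 + a ^ 2) : ¬ (p : ℤ) ∣ D := by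
  intro hpD
  have := Fact.mk hp
  have hD : (D : ZMod p) = 0 := (ZMod.intCast_zmod_eq_zero_iff_dvd D p).2 hpD
  have hmod := congrArg (Int.cast : ℤ → ZMod p) h
  push_cast [hD, mul_zero] at hmod
  have ha : (a : ZMod p) = 0 :=
    ZMod.eq_zero_of_sq_add_sq_eq_zero hp4 (y := a * c + 1) (by linear_combination -hmod)
  simpa [ha] using ZMod.eq_zero_of_sq_add_sq_eq_zero hp4 hmod.symm

theorem sqrt_cf_period_three_not_dvd_general (D : ℕ) (hsq : ¬ IsSquare D)
    (a₀ a₁ : ℤ)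
    (h : IsPeriodicCF (Real.sqrt D) 3
      (fun n => if n = 0 then a₀ else if n ≤ 2 then a₁ else 2 * a₀)) :
    ∀ p : ℕ, p.Prime → p % 4 = 3 → ¬ p ∣ D := by
  intro p hp hp4 hpD
  have key : (a₁ ^ 2 + 1) * (D : ℤ) = (a₀ * a₁ + 1) ^ 2 + a₀ ^ 2 := by
    have := h.sq_add_one_mul_sq_eq (irrational_sqrt_natCast_iff.mpr hsq)
    rw [Real.sq_sqrt D.cast_nonneg] at this
    exact_mod_cast this
  exact hp.not_dvd_of_mul_eq_sq_add_sq hp4 key (Int.natCast_dvd_natCast.2 hpD)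

/-- If `√D = [a₀; \overline{a₁, a₁, 2a₀}]` (period length 3), then `D` is not
divisible by any prime `p ≡ 3 (mod 4)`. -/
theorem sqrt_cf_period_three_not_dvd (D : ℕ) (hD : 0 < D) (hsq : ¬ IsSquare D)
    (a₀ a₁ : ℤ)
    (h : IsPeriodicCF (Real.sqrt D) 3
      (fun n => if n = 0 then a₀ else if n ≤ 2 then a₁ else 2 * a₀)) :
    ∀ p : ℕ, p.Prime → p % 4 = 3 → ¬ p ∣ D :=
  sqrt_cf_period_three_not_dvd_general D hsq a₀ a₁ h
end

section
/- Let p be a prime with p = 2 or p ≡ 1 (mod 4), and let m be any integer. Then there exists a positive non-square integer D such that the continued fraction expansion of √D has a period of length 3 and D ≡ m (mod p). -/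
lemma cf_facts (a b d : ℤ) (ha : 1 ≤ a) (hb : 1 ≤ b) (hba : b ≤ 2*a)
    (hd : d * (b^2+1) = 2*a*b+1) :
    cfCoeff (Real.sqrt ((a:ℝ)^2 + d)) 0 = a ∧
    cfCoeff (Real.sqrt ((a:ℝ)^2 + d)) 1 = b ∧
    cfCoeff (Real.sqrt ((a:ℝ)^2 + d)) 2 = b ∧
    cfCoeff (Real.sqrt ((a:ℝ)^2 + d)) 3 = 2*a ∧
    (∀ n : ℕ, 1 ≤ n → gaussIter (Real.sqrt ((a:ℝ)^2 + d)) (n+3)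
      = gaussIter (Real.sqrt ((a:ℝ)^2 + d)) n) := by
  have habb : (0:ℤ) ≤ 2*a*(b-1)*b := by
    apply mul_nonneg; apply mul_nonneg <;> linarith; linarith
  have hd1 : 1 ≤ d := by nlinarith [sq_nonneg b]
  have hd2a : d ≤ 2*a := by nlinarith [sq_nonneg b]
  have hbd : b*d ≤ 2*a := by nlinarith [sq_nonneg b]
  have hde : 1 ≤ d - (2*a - b*d) := by nlinarith [sq_nonneg b]
  set x := Real.sqrt ((a:ℝ)^2 + d) with hx
  have haR : (1:ℝ) ≤ (a:ℝ) := by exact_mod_cast ha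
  have hbR : (1:ℝ) ≤ (b:ℝ) := by exact_mod_cast hb
  have hd1R : (1:ℝ) ≤ (d:ℝ) := by exact_mod_cast hd1
  have hd2aR : (d:ℝ) ≤ 2*a := by exact_mod_cast hd2a
  have hbdR : (b:ℝ)*d ≤ 2*a := by exact_mod_cast hbd
  have hdeR : (1:ℝ) ≤ (d:ℝ) - (2*a - b*d) := by exact_mod_cast hde
  have hdR : (d:ℝ) * ((b:ℝ)^2+1) = 2*a*b+1 := by exact_mod_cast hd
  have hDpos : (0:ℝ) < (a:ℝ)^2 + d := by nlinarith
  have hx2 : x^2 = (a:ℝ)^2 + d := Real.sq_sqrt hDpos.le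
  have hxnn : 0 ≤ x := Real.sqrt_nonneg _
  have hax : (a:ℝ) < x := by nlinarith
  have hxa1 : x < (a:ℝ) + 1 := by nlinarith
  have hxad : x < (a:ℝ) + d := by nlinarith
  have hxf : x < (b:ℝ)*d + d - a := by nlinarith
  have hdRpos : (0:ℝ) < d := by linarith
  have hdne : (d:ℝ) ≠ 0 := by linarith
  -- floor at 0
  have hf0 : ⌊x⌋ = a := by
    rw [Int.floor_eq_iff]
    exact ⟨by exact_mod_cast hax.le, by push_cast; linarith⟩
  have h0 : gaussIter x 0 = x := rfl
  have h1 : gaussIter x 1 = (x + a)/d := by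
    show (gaussIter x 0 - ⌊gaussIter x 0⌋)⁻¹ = _
    rw [h0, hf0]
    refine inv_eq_of_mul_eq_one_right ?_
    field_simp
    linear_combination hx2
  have hf1 : ⌊(x + (a:ℝ))/d⌋ = b := by
    rw [Int.floor_eq_iff, le_div_iff₀ hdRpos, div_lt_iff₀ hdRpos]
    constructor
    · linarith
    · push_cast; linarith
  have h2 : gaussIter x 2 = (x + ((b:ℝ)*d - a))/d := by
    show (gaussIter x 1 - ⌊gaussIter x 1⌋)⁻¹ = _
    rw [h1, hf1]
    refine inv_eq_of_mul_eq_one_right ?_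
    field_simp
    linear_combination hx2 - (d:ℝ)*hdR
  have hf2 : ⌊(x + ((b:ℝ)*d - a))/d⌋ = b := by
    rw [Int.floor_eq_iff, le_div_iff₀ hdRpos, div_lt_iff₀ hdRpos]
    constructor
    · linarith
    · push_cast; linarith
  have h3 : gaussIter x 3 = x + a := by
    show (gaussIter x 2 - ⌊gaussIter x 2⌋)⁻¹ = _
    rw [h2, hf2]
    refine inv_eq_of_mul_eq_one_right ?_
    field_simp
    linear_combination hx2
  have hf3 : ⌊x + (a:ℝ)⌋ = 2*a := by
    rw [show x + (a:ℝ) = x + (a:ℤ) by push_cast; ring, Int.floor_add_intCast, hf0]; ring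
  have h4 : gaussIter x 4 = gaussIter x 1 := by
    show (gaussIter x 3 - ⌊gaussIter x 3⌋)⁻¹ = _
    rw [h3, hf3, h1]
    refine inv_eq_of_mul_eq_one_right ?_
    field_simp
    push_cast
    linear_combination hx2
  have hper : ∀ n : ℕ, 1 ≤ n → gaussIter x (n+3) = gaussIter x n := by
    intro n hn
    induction n with
    | zero => omega
    | succ k ih =>
      rcases Nat.eq_or_lt_of_le hn with h | h
      · have hk0 : k = 0 := by omega
        subst hk0
        exact h4
      · have hk : 1 ≤ k := by omega
        show gaussIter x ((k+3)+1) = gaussIter x (k+1)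
        show (gaussIter x (k+3) - ⌊gaussIter x (k+3)⌋)⁻¹ = (gaussIter x k - ⌊gaussIter x k⌋)⁻¹
        rw [ih hk]
  refine ⟨?_, ?_, ?_, ?_, hper⟩
  · show ⌊gaussIter x 0⌋ = a; rw [h0, hf0]
  · show ⌊gaussIter x 1⌋ = b; rw [h1, hf1]
  · show ⌊gaussIter x 2⌋ = b; rw [h2, hf2]
  · show ⌊gaussIter x 3⌋ = 2*a; rw [h3, hf3]

lemma nonsq (a d D : ℕ) (ha : 1 ≤ a) (hd : 1 ≤ d) (hd2 : d ≤ 2*a)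
    (hD : D = a^2+d) : ¬ IsSquare D := by
  rintro ⟨r, hr⟩
  have h1 : a*a < r*r := by nlinarith
  have h2 : a < r := Nat.mul_self_lt_mul_self_iff.mp h1
  have h3 : a + 1 ≤ r := h2
  nlinarith

lemma exists_D (a b d : ℤ) (ha : 1 ≤ a) (hb : 1 ≤ b) (hba : b ≤ 2*a)
    (hd : d * (b^2+1) = 2*a*b+1) :
    ∃ D : ℕ, (D:ℤ) = a^2 + d ∧ 0 < D ∧ ¬ IsSquare D ∧
      IsPeriodicCF (Real.sqrt D) 3
        (fun n => if n = 0 then a else if n = 1 then b else if n = 2 then b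
          else 2 * a) := by
  have habb : (0:ℤ) ≤ 2*a*(b-1)*b := by
    apply mul_nonneg; apply mul_nonneg <;> linarith; linarith
  have hd1 : 1 ≤ d := by nlinarith [sq_nonneg b]
  have hd2a : d ≤ 2*a := by nlinarith [sq_nonneg b]
  refine ⟨(a^2+d).toNat, ?_, ?_, ?_, ?_⟩
  · rw [Int.toNat_of_nonneg (by positivity)]
  · have : (0:ℤ) < a^2 + d := by positivity
    omega
  · have ha0 : (0:ℤ) ≤ a := by linarith
    have hd0 : (0:ℤ) ≤ d := by linarith
    apply nonsq a.toNat d.toNat _ (by omega) (by omega) (by omega)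
    have : ((a^2+d).toNat : ℤ) = ((a.toNat^2 + d.toNat : ℕ) : ℤ) := by
      rw [Int.toNat_of_nonneg (by positivity : (0:ℤ) ≤ a^2+d)]
      push_cast [Int.toNat_of_nonneg ha0, Int.toNat_of_nonneg hd0]
      ring
    exact_mod_cast this
  · have hcast : ((((a:ℤ)^2+d).toNat : ℕ) : ℝ) = (a:ℝ)^2 + d := by
      rw [show (((a:ℤ)^2+d).toNat : ℝ) = (((a^2+d).toNat : ℤ) : ℝ) by push_cast; ring,
        Int.toNat_of_nonneg (by positivity)]
      push_cast; ring
    rw [hcast]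
    obtain ⟨hc0, hc1, hc2, hc3, hper⟩ := cf_facts a b d ha hb hba hd
    set x := Real.sqrt ((a:ℝ)^2 + d) with hx
    have hcp : ∀ n : ℕ, 1 ≤ n → cfCoeff x (n+3) = cfCoeff x n := by
      intro n hn; unfold cfCoeff; rw [hper n hn]
    refine ⟨by norm_num; linarith, ?_, by norm_num, by simpa using hc0, ?_⟩
    · intro i h1 h3
      interval_cases i <;> simp <;> linarith
    · intro n
      induction n using Nat.strong_induction_on with
      | _ n ih =>
        match n with
        | 0 => omega
        | 1 => intro _; simpa using hc1
        | 2 => intro _; simpa using hc2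
        | 3 => intro _; simpa using hc3
        | (k+4) =>
          intro _
          have e1 : cfCoeff x (k+4) = cfCoeff x (k+1) := hcp (k+1) (by omega)
          rw [e1, ih (k+1) (by omega) (by omega)]
          congr 1
          omega

/-- For a prime `p` with `p = 2` or `p ≡ 1 (mod 4)` and any integer `m`, there is
a positive non-square `D` whose square root has a continued fraction with period
of length 3 and `D ≡ m (mod p)`. -/
theorem exists_sqrt_cf_period_three_mod (p : ℕ) (hp : p.Prime)
    (hp1 : p = 2 ∨ p % 4 = 1) (m : ℤ) :
    ∃ D : ℕ, 0 < D ∧ ¬ IsSquare D ∧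
      (∃ a₀ a₁ a₂ : ℤ, IsPeriodicCF (Real.sqrt D) 3
        (fun n => if n = 0 then a₀ else if n = 1 then a₁ else if n = 2 then a₂
          else 2 * a₀)) ∧
      (D : ℤ) ≡ m [ZMOD (p : ℤ)] := by
  rcases hp1 with hp2 | hp4
  · -- p = 2
    subst hp2
    rcases Int.even_or_odd m with he | ho
    · obtain ⟨D, hDv, hDp, hDs, hDcf⟩ := exists_D 1 2 1 (by norm_num) (by norm_num)
        (by norm_num) (by norm_num)
      refine ⟨D, hDp, hDs, ⟨1, 2, 2, hDcf⟩, ?_⟩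
      have hm : m % 2 = 0 := Int.even_iff.mp he
      show (D:ℤ) % 2 = m % 2
      omega
    · obtain ⟨D, hDv, hDp, hDs, hDcf⟩ := exists_D 2 4 1 (by norm_num) (by norm_num)
        (by norm_num) (by norm_num)
      refine ⟨D, hDp, hDs, ⟨2, 4, 4, hDcf⟩, ?_⟩
      have hm : m % 2 = 1 := Int.odd_iff.mp ho
      show (D:ℤ) % 2 = m % 2
      omega
  · -- p ≡ 1 mod 4
    haveI : Fact p.Prime := ⟨hp⟩
    have hp5 : 5 ≤ p := by have := hp.two_le; omega
    obtain ⟨i, hi⟩ : IsSquare (-1 : ZMod p) :=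
      (ZMod.exists_sq_eq_neg_one_iff).mpr (by omega)
    have hi2 : i * i = -1 := hi.symm
    have hine : i ≠ 0 := by
      intro h
      rw [h, mul_zero] at hi2
      have : (1 : ZMod p) = 0 := by
        have := hi2.symm
        simpa [neg_eq_zero] using this
      exact one_ne_zero this
    have hpodd : p % 2 = 1 := by omega
    -- choose an even natural bn with (bn : ZMod p) = i
    set b0 : ℕ := i.val with hb0def
    have hb0cast : ((b0 : ℕ) : ZMod p) = i := ZMod.natCast_rightInverse i
    have hb0pos : 1 ≤ b0 := by
      have : b0 ≠ 0 := fun h => hine (by rwa [ZMod.val_eq_zero] at h)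
      omega
    set bn : ℕ := if b0 % 2 = 0 then b0 else b0 + p with hbndef
    have hbncast : ((bn : ℕ) : ZMod p) = i := by
      rw [hbndef]
      split
      · exact hb0cast
      · push_cast [ZMod.natCast_self]
        simpa using hb0cast
    have hbneven : bn % 2 = 0 := by
      rw [hbndef]; split <;> omega
    have hbnpos : 2 ≤ bn := by
      rw [hbndef]; split <;> omega
    obtain ⟨c, hc⟩ : ∃ c, bn = 2*c := ⟨bn/2, by omega⟩
    have hcpos : 1 ≤ c := by omega
    have hβ2 : ((bn : ZMod p))^2 = -1 := by rw [hbncast, sq]; exact hi2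
    have hβne : ((bn : ZMod p)) ≠ 0 := by rw [hbncast]; exact hine
    have h2ne : (2 : ZMod p) ≠ 0 := by
      have h := (ZMod.natCast_eq_zero_iff 2 p).not.mpr
        (fun h => absurd (Nat.le_of_dvd two_pos h) (by omega))
      simpa using h
    have hwne : (2 * (bn : ZMod p)) ≠ 0 := mul_ne_zero h2ne hβne
    set u : ZMod p := (m : ZMod p) - (c : ZMod p)^2 with hudef
    set k : ℕ := (u * (2 * (bn : ZMod p))⁻¹).val with hkdef
    have hk : (k : ZMod p) * (2 * (bn : ZMod p)) = u := by
      rw [hkdef, ZMod.natCast_rightInverse _, inv_mul_cancel_right₀ hwne]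
    -- integer parameters
    set B : ℤ := (bn : ℤ) with hBdef
    set C : ℤ := (c : ℤ) with hCdef
    set K : ℤ := (k : ℤ) with hKdef
    have hBC : B = 2*C := by rw [hBdef, hCdef]; exact_mod_cast hc
    have hB2 : 2 ≤ B := by rw [hBdef]; exact_mod_cast hbnpos
    have hC1 : 1 ≤ C := by rw [hCdef]; exact_mod_cast hcpos
    have hK0 : 0 ≤ K := by positivity
    have ha : 1 ≤ C*(B^2+2) + K*(B^2+1) := by nlinarith
    have hba : B ≤ 2*(C*(B^2+2) + K*(B^2+1)) := by nlinarith
    have hd : (B^2+1+2*K*B)*(B^2+1) = 2*(C*(B^2+2) + K*(B^2+1))*B + 1 := by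
      linear_combination (B*(B^2+2)) * hBC
    obtain ⟨D, hDv, hDp, hDs, hDcf⟩ :=
      exists_D (C*(B^2+2) + K*(B^2+1)) B (B^2+1+2*K*B) ha (by linarith) hba hd
    refine ⟨D, hDp, hDs, ⟨_, _, _, hDcf⟩, ?_⟩
    rw [← ZMod.intCast_eq_intCast_iff]
    rw [hDv]
    push_cast [hBdef, hCdef, hKdef]
    linear_combination
      ((((c:ZMod p)) + k) * ((c:ZMod p)*(((bn:ZMod p))^2+2) + k*(((bn:ZMod p))^2+1) + c) + 1) * hβ2
      + hk
end

section
/- Let k be an even positive integer, p an odd prime, a a positive integer, and set l = k/2 − 1. Let (a₁, …, a_{k−1}) be a palindromic sequence of positive integers (a_i = a_{k−i} for all 1 ≤ i ≤ k−1), and define q₋₁ = 0, q₀ = 1, q_n = a_n·q_{n−1} + q_{n−2} for 1 ≤ n ≤ k−1. Suppose that either (a) l is odd and a₁ ≡ a₃ ≡ … ≡ a_l ≡ 0 (mod p^a), or (b) l is even, a₄ ≡ a₆ ≡ … ≡ a_l ≡ 0 (mod p^a), p does not divide a₁, and a₁·a₂ ≡ −1 (mod p^a). Then q_{k−2}² ≡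 1 (mod p). -/
/-- The continuant sequence shifted by one: `cont a n = q_{n-1}`, where
`q₋₁ = 0`, `q₀ = 1` and `q_n = a_n * q_{n-1} + q_{n-2}`. Thus `cont a 0 = q₋₁`,
`cont a 1 = q₀`, and `cont a (n + 1) = q_n` for `n ≥ 0`. -/
def cont (a : ℕ → ℤ) : ℕ → ℤ
  | 0 => 0
  | 1 => 1
  | n + 2 => a (n + 1) * cont a (n + 1) + cont a n

lemma cont_zero (a : ℕ → ℤ) : cont a 0 = 0 := rfl
lemma cont_one (a : ℕ → ℤ) : cont a 1 = 1 := rfl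
lemma cont_add_two (a : ℕ → ℤ) (n : ℕ) :
    cont a (n + 2) = a (n + 1) * cont a (n + 1) + cont a n := rfl

/-- Splitting identity for continuants. -/
lemma cont_split (f : ℕ → ℤ) (m : ℕ) : ∀ n : ℕ,
    cont f (m + n + 1) = cont f (m + 1) * cont (fun i => f (i + m)) (n + 1)
      + cont f m * cont (fun i => f (i + m + 1)) n := by
  have key : ∀ n : ℕ,
      (cont f (m + n + 1) = cont f (m + 1) * cont (fun i => f (i + m)) (n + 1)
        + cont f m * cont (fun i => f (i + m + 1)) n) ∧
      (cont f (m + (n+1) + 1) = cont f (m + 1) * cont (fun i => f (i + m)) (n + 2)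
        + cont f m * cont (fun i => f (i + m + 1)) (n+1)) := by
    intro n
    induction n with
    | zero =>
      constructor
      · simp [cont_one, cont_zero, cont_add_two]
      · have h1 : m + 1 + 1 = m + 2 := by ring
        simp [cont_one, cont_zero, cont_add_two, h1]
        ring
    | succ n ih =>
      refine ⟨ih.2, ?_⟩
      have e1 : m + (n + 2) + 1 = (m + n + 1) + 2 := by ring
      rw [e1, cont_add_two]
      have e2 : m + n + 1 + 1 = m + (n + 1) + 1 := by ring
      rw [e2, ih.2.trans rfl]
      have e3 : cont (fun i => f (i + m)) (n + 3)
          = f (n + 2 + m) * cont (fun i => f (i + m)) (n + 2)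
            + cont (fun i => f (i + m)) (n + 1) := cont_add_two _ (n+1)
      have e4 : cont (fun i => f (i + m + 1)) (n + 2)
          = f (n + 1 + m + 1) * cont (fun i => f (i + m + 1)) (n + 1)
            + cont (fun i => f (i + m + 1)) n := cont_add_two _ n
      rw [e3, e4, ih.1]
      have e5 : m + (n + 1) + 1 = n + 2 + m := by ring
      have e6 : n + 1 + m + 1 = n + 2 + m := by ring
      rw [e5, e6]
      ring
  exact fun n => (key n).1

/-- Reversal invariance of continuants. -/
lemma cont_rev : ∀ n : ℕ, ∀ b c : ℕ → ℤ,
    (∀ i : ℕ, 1 ≤ i → i ≤ n → b i = c (n + 1 - i)) → cont b (n + 1) = cont c (n + 1) := by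
  intro n
  induction n using Nat.strong_induction_on with
  | _ n ih =>
    match n with
    | 0 => intro b c _; rfl
    | 1 =>
      intro b c h
      have := h 1 le_rfl le_rfl
      simp [cont_add_two, cont_one, cont_zero, this]
    | (n+2) =>
      intro b c h
      have hb : cont b (n + 3) = b (n + 2) * cont b (n + 2) + cont b (n + 1) :=
        cont_add_two b (n+1)
      have hc : cont c (n + 3) = cont c 2 * cont (fun i => c (i + 1)) (n + 2)
          + cont c 1 * cont (fun i => c (i + 1 + 1)) (n + 1) := by
        have h0 := cont_split c 1 (n + 1)
        have e0 : 1 + (n + 1) + 1 = n + 3 := by ring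
        rw [e0] at h0
        exact h0
      have h1 : cont b (n + 2) = cont (fun i => c (i + 1)) (n + 2) := by
        apply ih (n+1) (by omega)
        intro i hi1 hi2
        have := h i hi1 (by omega)
        rw [this]
        congr 1
        omega
      have h2 : cont b (n + 1) = cont (fun i => c (i + 1 + 1)) (n + 1) := by
        apply ih n (by omega)
        intro i hi1 hi2
        have := h i hi1 (by omega)
        rw [this]
        congr 1
        omega
      have hbn : b (n + 2) = c 1 := by
        have := h (n + 2) (by omega) le_rfl
        simpa using this
      rw [hb, hc, h1, h2, hbn]
      simp [cont_add_two, cont_one, cont_zero]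

/-- Determinant identity. -/
lemma cont_det (f : ℕ → ℤ) : ∀ n : ℕ,
    cont f (n + 2) * cont (fun i => f (i + 1)) n
      - cont f (n + 1) * cont (fun i => f (i + 1)) (n + 1) = (-1) ^ (n + 1) := by
  intro n
  induction n with
  | zero => simp [cont_add_two, cont_one, cont_zero]
  | succ n ih =>
    have e1 : cont f (n + 3) = f (n + 2) * cont f (n + 2) + cont f (n + 1) :=
      cont_add_two f (n + 1)
    have e2 : cont (fun i => f (i + 1)) (n + 2)
        = f (n + 1 + 1) * cont (fun i => f (i + 1)) (n + 1)
          + cont (fun i => f (i + 1)) n := cont_add_two _ n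
    rw [e1, e2]
    have h3 : f (n + 1 + 1) = f (n + 2) := by norm_num
    rw [h3]
    have h4 : (-1 : ℤ) ^ (n + 2) = -((-1) ^ (n + 1)) := by ring
    rw [h4, ← ih]
    ring

/-- Lemma: `q_{k-2}² ≡ 1 (mod p)` (here `q_{k-2} = cont a (k-1)`) under the
choice of coefficients from the paper. -/
theorem cont_q_sq_one_mod
    (k : ℕ) (hk : 0 < k) (hkeven : Even k)
    (p : ℕ) (hp : p.Prime) (hpodd : Odd p) (e : ℕ) (he : 0 < e)
    (l : ℕ) (hl : l = k / 2 - 1)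
    (a : ℕ → ℤ) (hapos : ∀ i : ℕ, 1 ≤ i → i ≤ k - 1 → 0 < a i)
    (hpal : ∀ i : ℕ, 1 ≤ i → i ≤ k - 1 → a i = a (k - i))
    (hchoice :
      (Odd l ∧ ∀ i : ℕ, 1 ≤ i → i ≤ l → Odd i → ((p : ℤ) ^ e ∣ a i)) ∨
      (Even l ∧ (∀ i : ℕ, 4 ≤ i → i ≤ l → Even i → ((p : ℤ) ^ e ∣ a i)) ∧
        ¬ ((p : ℤ) ∣ a 1) ∧ a 1 * a 2 ≡ -1 [ZMOD (p : ℤ) ^ e])) :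
    (cont a (k - 1)) ^ 2 ≡ 1 [ZMOD (p : ℤ)] := by
  -- k = 2 case is trivial
  rcases Nat.lt_or_ge k 4 with hk2 | hk4
  · have : k = 2 := by
      obtain ⟨m, hm⟩ := hkeven; omega
    subst this
    simp [cont_one]
  -- now k = 2l + 2 with l ≥ 1
  have hkl : k = 2 * l + 2 := by
    obtain ⟨m, hm⟩ := hkeven; omega
  have hl1 : 1 ≤ l := by omega
  -- Step 1: p^e ∣ q_l = cont a (l + 1)
  have hql : (p : ℤ) ^ e ∣ cont a (l + 1) := by
    rcases hchoice with ⟨hlodd, hdiv⟩ | ⟨hleven, hdiv, _, hcong⟩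
    · -- odd case: show for all odd n ≤ l
      have key : ∀ n : ℕ, n ≤ l → Odd n → (p : ℤ) ^ e ∣ cont a (n + 1) := by
        intro n
        induction n using Nat.strong_induction_on with
        | _ n ih =>
          intro hn hodd
          obtain ⟨t, ht⟩ := hodd
          rcases n with _ | _ | _ | m
          · omega
          · have h1 : cont a 2 = a 1 := by simp [cont_add_two, cont_one, cont_zero]
            rw [h1]
            exact hdiv 1 le_rfl hn ⟨0, by norm_num⟩
          · omega
          · rw [cont_add_two]
            apply dvd_add
            · exact Dvd.dvd.mul_right (hdiv (m + 3) (by omega) hn ⟨t, by omega⟩) _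
            · exact ih (m + 1) (by omega) (by omega) ⟨t - 1, by omega⟩
      exact key l le_rfl hlodd
    · -- even case
      have hl2 : 2 ≤ l := by
        obtain ⟨m, hm⟩ := hleven; omega
      have key : ∀ n : ℕ, 2 ≤ n → n ≤ l → Even n → (p : ℤ) ^ e ∣ cont a (n + 1) := by
        intro n
        induction n using Nat.strong_induction_on with
        | _ n ih =>
          intro hn2 hn heven
          obtain ⟨t, ht⟩ := heven
          rcases n with _ | _ | _ | _ | m
          · omega
          · omega
          · have h2 : cont a 3 = a 2 * a 1 + 1 := by
              simp [cont_add_two, cont_one, cont_zero]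
            rw [h2]
            have hd := hcong.dvd
            have e1 : (-1 : ℤ) - a 1 * a 2 = -(a 2 * a 1 + 1) := by ring
            rw [e1] at hd
            exact dvd_neg.mp hd
          · omega
          · rw [cont_add_two]
            apply dvd_add
            · exact Dvd.dvd.mul_right (hdiv (m + 4) (by omega) hn ⟨t, by omega⟩) _
            · exact ih (m + 2) (by omega) (by omega) (by omega) ⟨t - 1, by omega⟩
      exact key l hl2 le_rfl hleven
  -- Step 2: p^e ∣ q_{k-1} = cont a (2l + 2)
  have hsplit := cont_split a l (l + 1)
  have hrev : cont (fun i => a (i + l + 1)) (l + 1) = cont a (l + 1) := by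
    apply cont_rev l
    intro i hi1 hi2
    have hh := hpal (i + l + 1) (by omega) (by omega)
    rw [hh]
    congr 1
    omega
  have hQ : (p : ℤ) ^ e ∣ cont a (2 * l + 2) := by
    have e1 : l + (l + 1) + 1 = 2 * l + 2 := by ring
    rw [e1] at hsplit
    rw [hsplit, hrev]
    exact dvd_add (hql.mul_right _) (hql.mul_left _)
  -- Step 3: determinant identity at n = 2l
  have hdet := cont_det a (2 * l)
  have hrev2 : cont (fun i => a (i + 1)) (2 * l + 1) = cont a (2 * l + 1) := by
    apply cont_rev (2 * l)
    intro i hi1 hi2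
    have hh := hpal (i + 1) (by omega) (by omega)
    rw [hh]
    congr 1
    omega
  rw [hrev2] at hdet
  have hneg : (-1 : ℤ) ^ (2 * l + 1) = -1 := by
    rw [pow_succ, pow_mul]
    norm_num
  rw [hneg] at hdet
  -- conclude
  have hk1 : k - 1 = 2 * l + 1 := by omega
  rw [hk1]
  have hpd : (p : ℤ) ∣ cont a (2 * l + 2) :=
    dvd_trans (dvd_pow_self (p : ℤ) he.ne') hQ
  show Int.ModEq _ _ _
  rw [Int.modEq_iff_dvd]
  have e2 : (1 : ℤ) - cont a (2 * l + 1) ^ 2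
      = -(cont a (2 * l + 2) * cont (fun i => a (i + 1)) (2 * l)) := by
    nlinarith [hdet]
  rw [e2]
  exact dvd_neg.mpr (hpd.mul_right _)
end

section
/- For every integer m, every positive integer n, and every integer s, there exists a non-square integer D ≥ 2 such that D ≡ m (mod n) and every universal quadratic form over ℤ[√D] has at least s variables. -/
/-!
Let a universal form `Q` with polar form `B` represent totally positive `α₁, …, α_t` as
`αₖ = Q vₖ`. As `Q` is totally positive, Cauchy–Schwarz in each real embedding gives
`B(vₖ, vₗ)² ≼ 4 αₖ αₗ`. So if no nonzero `β` satisfies `β² ≼ 4 αₖ αₗ` for `k ≠ l`, the `vₖ` are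
pairwise orthogonal with `B(vₖ, vₖ) = 2 αₖ` a non-zero-divisor, hence linearly independent, and
the rank is at least `t`.

Such elements exist as soon as `√D` lies just below `W - ∑_{0 < ν ≤ t} 2^(-g ν)`, where
`g ν = 4^(ν+1)` is lacunary: `α_K = 2^(g K) (W - ∑_{0 < ν ≤ K} 2^(-g ν) + √D)` lies in `ℤ[√D]`
and its conjugate is tiny. A nonzero `β = a + b√D` with `β² ≼ 4 αᵢ αⱼ`, `i < j`, would have a
tiny conjugate and `|b| < 2^(g j)`. Then `b = 0` forces `a = 0`, while for `b ≠ 0` the integer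
`2^(g j) a - b A` would be nonzero (the rational part `A` of `αⱼ` is odd) yet smaller than `1`.
The window for `D` is longer than `2n + 1`, so it contains a non-square `D ≡ m (mod n)`:
squares above `n²` are more than `n` apart.
-/

/-- An element `z = z.re + z.im * √d` of `ℤ[√d]` is totally positive if both it
and its conjugate `z.re - z.im * √d` are positive (as real numbers). -/
def TotPos (d : ℤ) (z : Zsqrtd d) : Prop :=
  0 < (z.re : ℝ) + (z.im : ℝ) * Real.sqrt d ∧
    0 < (z.re : ℝ) - (z.im : ℝ) * Real.sqrt d

/-- The value of the quadratic form `∑_{i ≤ j} c i j * x i * x j` in `r`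
variables over `ℤ[√d]` with coefficients `c`. -/
def QFval (d : ℤ) {r : ℕ} (c : Fin r → Fin r → Zsqrtd d)
    (x : Fin r → Zsqrtd d) : Zsqrtd d :=
  ∑ i : Fin r, ∑ j : Fin r, if i ≤ j then c i j * x i * x j else 0

/-- The quadratic form with coefficients `c` is totally positive: it takes
totally positive values on all nonzero tuples. -/
def IsTotPosForm (d : ℤ) {r : ℕ} (c : Fin r → Fin r → Zsqrtd d) : Prop :=
  ∀ x : Fin r → Zsqrtd d, x ≠ 0 → TotPos d (QFval d c x)

/-- The quadratic form with coefficients `c` is universal over `ℤ[√d]`: it is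
totally positive and represents every totally positive element of `ℤ[√d]`. -/
def IsUniversal (d : ℤ) {r : ℕ} (c : Fin r → Fin r → Zsqrtd d) : Prop :=
  IsTotPosForm d c ∧ ∀ z : Zsqrtd d, TotPos d z → ∃ x, QFval d c x = z

open Finset

section Quadratic

theorem sq_le_four_mul_of_forall_int_nonneg {A B C : ℝ}
    (h : ∀ p q : ℤ, 0 ≤ A * p ^ 2 + B * (p * q) + C * q ^ 2) : B ^ 2 ≤ 4 * (A * C) := by
  have hrat : ∀ x : ℚ, 0 ≤ A * ((x : ℝ) * x) + B * x + C := by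
    intro x
    have hx : A * ((x : ℝ) * x) + B * x + C
        = (A * x.num ^ 2 + B * (x.num * x.den) + C * x.den ^ 2) / (x.den : ℝ) ^ 2 := by
      rw [Rat.cast_def x]; field_simp
    rw [hx]
    exact div_nonneg (h x.num x.den) (sq_nonneg _)
  have hreal : ∀ x : ℝ, 0 ≤ A * (x * x) + B * x + C := fun x =>
    Rat.denseRange_cast.induction_on x (isClosed_le continuous_const (by fun_prop)) hrat
  have := discrim_le_zero hreal
  rw [discrim] at this
  linarith

theorem QuadraticMap.sq_polar_le {R M : Type*} [CommRing R] [AddCommGroup M] [Module R M]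
    (Q : QuadraticMap R M R) (f : R →+* ℝ) (hf : ∀ x, 0 ≤ f (Q x)) (x y : M) :
    f (polar Q x y) ^ 2 ≤ 4 * (f (Q x) * f (Q y)) := by
  refine sq_le_four_mul_of_forall_int_nonneg fun p q => ?_
  have := hf ((p : R) • x + (q : R) • y)
  rw [QuadraticMap.map_add (⇑Q), QuadraticMap.map_smul, QuadraticMap.map_smul, polar_smul_left,
    polar_smul_right] at this
  simp only [smul_eq_mul, map_add, map_mul, map_intCast] at this
  linarith

theorem LinearMap.IsOrthoᵢ.linearIndependent {R M ι : Type*} [CommRing R] [AddCommGroup M]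
    [Module R M] {B : M →ₗ[R] M →ₗ[R] R} {v : ι → M} (hB : B.IsOrthoᵢ v)
    (hv : ∀ i, B (v i) (v i) ∈ nonZeroDivisors R) : LinearIndependent R v := by
  classical
  rw [linearIndependent_iff']
  intro s g hs i hi
  have h := congrArg (fun x => B x (v i)) hs
  simp only [map_sum, map_smul, LinearMap.sum_apply, LinearMap.smul_apply, smul_eq_mul,
    map_zero, LinearMap.zero_apply] at h
  rw [sum_eq_single_of_mem i hi fun j _ hji => by rw [hB hji, mul_zero]] at h
  exact (mul_right_mem_nonZeroDivisors_eq_zero_iff (hv i)).1 h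

def QFform (d : ℤ) {r : ℕ} (c : Fin r → Fin r → Zsqrtd d) :
    QuadraticMap (Zsqrtd d) (Fin r → Zsqrtd d) (Zsqrtd d) :=
  ∑ i, ∑ j, if i ≤ j then c i j • QuadraticMap.proj i j else 0

theorem QFform_apply (d : ℤ) {r : ℕ} (c : Fin r → Fin r → Zsqrtd d) (x : Fin r → Zsqrtd d) :
    QFform d c x = QFval d c x := by
  simp only [QFform, QFval, _root_.sum_apply, apply_ite (fun Q : QuadraticMap _ _ _ => Q x)]
  simp [mul_assoc]

end Quadratic

section Embeddings

variable {d : ℤ}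

noncomputable def embPos (d : ℤ) (z : Zsqrtd d) : ℝ := z.re + z.im * √d

noncomputable def embNeg (d : ℤ) (z : Zsqrtd d) : ℝ := z.re - z.im * √d

noncomputable def embPosHom (hd : 0 ≤ d) : Zsqrtd d →+* ℝ :=
  Zsqrtd.lift ⟨√d, Real.mul_self_sqrt (Int.cast_nonneg hd)⟩

noncomputable def embNegHom (hd : 0 ≤ d) : Zsqrtd d →+* ℝ :=
  Zsqrtd.lift ⟨-√d, by rw [neg_mul_neg]; exact Real.mul_self_sqrt (Int.cast_nonneg hd)⟩

@[simp] theorem embPosHom_apply (hd : 0 ≤ d) (z : Zsqrtd d) : embPosHom hd z = embPos d z := by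
  simp [embPosHom, embPos]

@[simp] theorem embNegHom_apply (hd : 0 ≤ d) (z : Zsqrtd d) : embNegHom hd z = embNeg d z := by
  simp only [embNegHom, Zsqrtd.lift_apply_apply, mul_neg, embNeg, sub_eq_add_neg]

theorem eq_zero_of_embPos_eq_zero_of_embNeg_eq_zero (hd : 0 < d) {g : Zsqrtd d}
    (hpos : embPos d g = 0) (hneg : embNeg d g = 0) : g = 0 := by
  unfold embPos at hpos
  unfold embNeg at hneg
  have hsqrt : √(d : ℝ) ≠ 0 := (Real.sqrt_pos.2 (by exact_mod_cast hd)).ne'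
  have him : (g.im : ℝ) = 0 :=
    (mul_eq_zero.1 (by linarith : (g.im : ℝ) * √d = 0)).resolve_right hsqrt
  have hre : (g.re : ℝ) = 0 := by linarith
  exact Zsqrtd.ext (by exact_mod_cast hre) (by exact_mod_cast him)

theorem TotPos.mem_nonZeroDivisors (hd : 0 < d) {α : Zsqrtd d} (hα : TotPos d α) :
    α ∈ nonZeroDivisors (Zsqrtd d) := by
  refine mem_nonZeroDivisors_iff_right.2 fun g hg => ?_
  have hpos := congrArg (embPosHom hd.le) hg
  have hneg := congrArg (embNegHom hd.le) hg
  simp only [map_mul, map_zero, embPosHom_apply, embNegHom_apply] at hpos hneg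
  exact eq_zero_of_embPos_eq_zero_of_embNeg_eq_zero hd
    ((mul_eq_zero.1 hpos).resolve_right hα.1.ne') ((mul_eq_zero.1 hneg).resolve_right hα.2.ne')

theorem IsTotPosForm.embPos_nonneg {r : ℕ} {c : Fin r → Fin r → Zsqrtd d}
    (hc : IsTotPosForm d c) (x : Fin r → Zsqrtd d) : 0 ≤ embPos d (QFval d c x) := by
  rcases eq_or_ne x 0 with rfl | hx
  · simp [QFval, embPos]
  · exact (hc x hx).1.le

theorem IsTotPosForm.embNeg_nonneg {r : ℕ} {c : Fin r → Fin r → Zsqrtd d}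
    (hc : IsTotPosForm d c) (x : Fin r → Zsqrtd d) : 0 ≤ embNeg d (QFval d c x) := by
  rcases eq_or_ne x 0 with rfl | hx
  · simp [QFval, embNeg]
  · exact (hc x hx).2.le

def IsSeparated (d : ℤ) (α γ : Zsqrtd d) : Prop :=
  ∀ β : Zsqrtd d, embPos d β ^ 2 ≤ 4 * (embPos d α * embPos d γ) →
    embNeg d β ^ 2 ≤ 4 * (embNeg d α * embNeg d γ) → β = 0

theorem IsSeparated.symm {α γ : Zsqrtd d} (h : IsSeparated d α γ) : IsSeparated d γ α :=
  fun β h₁ h₂ => h β (by rwa [mul_comm (embPos d α)]) (by rwa [mul_comm (embNeg d α)])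

theorem card_le_of_isUniversal (hd : 0 < d) {r : ℕ} {c : Fin r → Fin r → Zsqrtd d}
    (hc : IsUniversal d c) {ι : Type*} [Fintype ι] {α : ι → Zsqrtd d}
    (hα : ∀ k, TotPos d (α k)) (hsep : Pairwise fun k l => IsSeparated d (α k) (α l)) :
    Fintype.card ι ≤ r := by
  choose v hv using fun k => hc.2 (α k) (hα k)
  have hQv : ∀ k, QFform d c (v k) = α k := fun k => by rw [QFform_apply, hv]
  have horth : (QFform d c).polarBilin.IsOrthoᵢ v := by
    intro k l hkl
    refine hsep hkl _ ?_ ?_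
    · simpa [hQv] using (QFform d c).sq_polar_le (embPosHom hd.le)
        (fun x => by simpa [QFform_apply] using hc.1.embPos_nonneg x) (v k) (v l)
    · simpa [hQv] using (QFform d c).sq_polar_le (embNegHom hd.le)
        (fun x => by simpa [QFform_apply] using hc.1.embNeg_nonneg x) (v k) (v l)
  have hdiag : ∀ k, (QFform d c).polarBilin (v k) (v k) ∈ nonZeroDivisors (Zsqrtd d) := by
    intro k
    have h2 : TotPos d 2 := by simp [TotPos]
    simpa [QuadraticMap.polar_self, hQv] using
      mul_mem (h2.mem_nonZeroDivisors hd) ((hα k).mem_nonZeroDivisors hd)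
  simpa using (horth.linearIndependent hdiag).fintype_card_le_finrank

end Embeddings

section Lacunary

theorem sum_Ioc_le_two_mul_of_two_mul_succ_le {u : ℕ → ℝ} (hu0 : ∀ ν, 0 ≤ u ν)
    (hu : ∀ ν, 2 * u (ν + 1) ≤ u ν) {K L : ℕ} (hKL : K ≤ L) :
    ∑ ν ∈ Ioc K L, u ν ≤ 2 * u (K + 1) := by
  suffices ∑ ν ∈ Ioc K L, u ν + 2 * u (L + 1) ≤ 2 * u (K + 1) by linarith [hu0 (L + 1)]
  induction L, hKL using Nat.le_induction with
  | base => simp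
  | succ L hKL ih =>
    rw [sum_Ioc_succ_top hKL]
    linarith [hu (L + 1)]

def lacunaryExp (ν : ℕ) : ℕ := 4 ^ (ν + 1)

theorem lacunaryExp_strictMono : StrictMono lacunaryExp :=
  fun _ _ h => Nat.pow_lt_pow_right (by norm_num) (by omega)

theorem two_pow_lacunaryExp_succ (ν : ℕ) :
    (2 : ℝ) ^ lacunaryExp (ν + 1) = ((2 : ℝ) ^ lacunaryExp ν) ^ 4 := by
  rw [← pow_mul, lacunaryExp, lacunaryExp, pow_succ 4 (ν + 1)]

theorem sixteen_le_two_pow_lacunaryExp (ν : ℕ) : 16 ≤ (2 : ℝ) ^ lacunaryExp ν :=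
  calc (16 : ℝ) = 2 ^ lacunaryExp 0 := by norm_num [lacunaryExp]
    _ ≤ 2 ^ lacunaryExp ν :=
      pow_le_pow_right₀ one_le_two (lacunaryExp_strictMono.monotone (Nat.zero_le ν))

theorem two_pow_lacunaryExp_le_of_lt {i j : ℕ} (h : i < j) :
    ((2 : ℝ) ^ lacunaryExp i) ^ 4 ≤ 2 ^ lacunaryExp j := by
  rw [← two_pow_lacunaryExp_succ]
  exact pow_le_pow_right₀ one_le_two (lacunaryExp_strictMono.monotone h)

noncomputable def lacunarySum (K : ℕ) : ℝ := ∑ ν ∈ Ioc 0 K, ((2 : ℝ) ^ lacunaryExp ν)⁻¹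

def lacunaryNum (K : ℕ) : ℤ := ∑ ν ∈ Ioc 0 K, 2 ^ (lacunaryExp K - lacunaryExp ν)

theorem lacunaryNum_cast (K : ℕ) : (lacunaryNum K : ℝ) = 2 ^ lacunaryExp K * lacunarySum K := by
  rw [lacunaryNum, lacunarySum, mul_sum]
  push_cast
  refine sum_congr rfl fun ν hν => ?_
  exact pow_sub₀ _ two_ne_zero (lacunaryExp_strictMono.monotone (mem_Ioc.1 hν).2)

theorem odd_lacunaryNum {K : ℕ} (hK : 1 ≤ K) : Odd (lacunaryNum K) := by
  obtain ⟨K, rfl⟩ := Nat.exists_eq_add_of_le' hK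
  rw [lacunaryNum, sum_Ioc_succ_top (Nat.zero_le K), Nat.sub_self, pow_zero]
  refine Even.add_one (even_sum _ fun ν hν => ?_)
  have := lacunaryExp_strictMono (show ν < K + 1 by have := (mem_Ioc.1 hν).2; omega)
  exact (Int.even_pow' (by omega)).2 even_two

theorem lacunarySum_nonneg (K : ℕ) : 0 ≤ lacunarySum K := by
  unfold lacunarySum; positivity

theorem lacunarySum_mono : Monotone lacunarySum := fun _ _ h =>
  sum_le_sum_of_subset_of_nonneg (Ioc_subset_Ioc_right h) fun _ _ _ => by positivity

theorem lacunarySum_sub_le {K L : ℕ} (h : K ≤ L) :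
    lacunarySum L - lacunarySum K ≤ 2 * ((2 : ℝ) ^ lacunaryExp (K + 1))⁻¹ := by
  rw [lacunarySum, lacunarySum, ← sum_Ioc_consecutive _ (Nat.zero_le K) h, add_sub_cancel_left]
  refine sum_Ioc_le_two_mul_of_two_mul_succ_le (fun _ => by positivity) (fun ν => ?_) h
  rw [two_pow_lacunaryExp_succ, ← inv_pow]
  have h0 : ((2 : ℝ) ^ lacunaryExp ν)⁻¹ ≤ 16⁻¹ :=
    (inv_le_inv₀ (by positivity) (by norm_num)).2 (sixteen_le_two_pow_lacunaryExp ν)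
  have h1 : 0 ≤ ((2 : ℝ) ^ lacunaryExp ν)⁻¹ := by positivity
  nlinarith [pow_le_pow_left₀ h1 h0 3]

theorem lacunarySum_le_one (K : ℕ) : lacunarySum K ≤ 1 := by
  have h := lacunarySum_sub_le (Nat.zero_le K)
  have h0 : lacunarySum 0 = 0 := by simp [lacunarySum]
  have : ((2 : ℝ) ^ lacunaryExp 1)⁻¹ ≤ 1 / 2 := by norm_num [lacunaryExp]
  linarith

end Lacunary

theorem one_le_two_pow_mul_abs_sub_add {A a b : ℤ} {e : ℕ} (hA : Odd A) (hb0 : b ≠ 0)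
    (hb : |(b : ℝ)| < 2 ^ e) (ρ : ℝ) : 1 ≤ 2 ^ e * |a - b * ρ| + |(b : ℝ)| * |A - 2 ^ e * ρ| := by
  have hne : 2 ^ e * a - b * A ≠ 0 := fun h => by
    obtain ⟨k, rfl⟩ := hA
    have hcop : IsCoprime ((2 : ℤ) ^ e) (2 * k + 1) := IsCoprime.pow_left ⟨-k, 1, by ring⟩
    have hdvd : (2 : ℤ) ^ e ∣ b := hcop.dvd_of_dvd_mul_right ⟨a, by linarith⟩
    have : (2 : ℤ) ^ e ≤ |b| := Int.le_of_dvd (abs_pos.2 hb0) ((dvd_abs _ _).2 hdvd)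
    exact absurd (by exact_mod_cast this) (not_le.2 hb)
  have hcast : ((2 ^ e * a - b * A : ℤ) : ℝ) = 2 ^ e * (a - b * ρ) - b * (A - 2 ^ e * ρ) := by
    push_cast; ring
  calc (1 : ℝ) ≤ |((2 ^ e * a - b * A : ℤ) : ℝ)| := by exact_mod_cast Int.one_le_abs hne
    _ ≤ |2 ^ e * (a - b * ρ)| + |b * (A - 2 ^ e * ρ)| := by rw [hcast]; exact abs_sub _ _
    _ = 2 ^ e * |a - b * ρ| + |(b : ℝ)| * |A - 2 ^ e * ρ| := by
      rw [abs_mul, abs_mul, abs_of_pos (by positivity : (0 : ℝ) < 2 ^ e)]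

def lacunaryElt (d : ℤ) (W K : ℕ) : Zsqrtd d :=
  ⟨2 ^ lacunaryExp K * W - lacunaryNum K, 2 ^ lacunaryExp K⟩

section Window

variable {d : ℤ} {W t i j K : ℕ}

@[simp] theorem lacunaryElt_im : (lacunaryElt d W K).im = 2 ^ lacunaryExp K := rfl

theorem odd_lacunaryElt_re (hK : 1 ≤ K) : Odd (lacunaryElt d W K).re := by
  refine Even.sub_odd ?_ (odd_lacunaryNum hK)
  exact ((Int.even_pow' (by unfold lacunaryExp; positivity)).2 even_two).mul_right _

theorem embPos_lacunaryElt :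
    embPos d (lacunaryElt d W K) = 2 ^ lacunaryExp K * (W - lacunarySum K + √d) := by
  simp only [embPos, lacunaryElt, Int.cast_sub, Int.cast_mul, Int.cast_pow, Int.cast_ofNat,
    Int.cast_natCast, lacunaryNum_cast]
  ring

theorem embNeg_lacunaryElt :
    embNeg d (lacunaryElt d W K) = 2 ^ lacunaryExp K * (W - lacunarySum K - √d) := by
  simp only [embNeg, lacunaryElt, Int.cast_sub, Int.cast_mul, Int.cast_pow, Int.cast_ofNat,
    Int.cast_natCast, lacunaryNum_cast]
  ring

theorem embNeg_lacunaryElt_pos (hhi : √d < W - lacunarySum t) (hK : K ≤ t) :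
    0 < embNeg d (lacunaryElt d W K) := by
  rw [embNeg_lacunaryElt]
  have := lacunarySum_mono hK
  have : 0 < (W : ℝ) - lacunarySum K - √d := by linarith
  positivity

theorem embPos_lacunaryElt_pos (hhi : √d < W - lacunarySum t) (hK : K ≤ t) :
    0 < embPos d (lacunaryElt d W K) := by
  rw [embPos_lacunaryElt]
  have := lacunarySum_mono hK
  have : 0 < (W : ℝ) - lacunarySum K + √d := by linarith [Real.sqrt_nonneg d]
  positivity

theorem embPos_lacunaryElt_le (hhi : √d < W - lacunarySum t) :
    embPos d (lacunaryElt d W K) ≤ 2 * W * 2 ^ lacunaryExp K := by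
  rw [embPos_lacunaryElt]
  have := lacunarySum_nonneg K
  have := lacunarySum_nonneg t
  have : (0 : ℝ) < 2 ^ lacunaryExp K := by positivity
  nlinarith

theorem embNeg_lacunaryElt_le
    (hlo : (W : ℝ) - lacunarySum t - ((2 : ℝ) ^ lacunaryExp (t + 1))⁻¹ ≤ √d) (hK : K ≤ t) :
    embNeg d (lacunaryElt d W K) ≤ 3 / ((2 : ℝ) ^ lacunaryExp K) ^ 3 := by
  rw [embNeg_lacunaryElt]
  have htail := lacunarySum_sub_le hK
  have hθ : ((2 : ℝ) ^ lacunaryExp (t + 1))⁻¹ ≤ ((2 : ℝ) ^ lacunaryExp (K + 1))⁻¹ :=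
    inv_anti₀ (by positivity) (pow_le_pow_right₀ one_le_two
      (lacunaryExp_strictMono.monotone (by omega)))
  rw [two_pow_lacunaryExp_succ K] at htail hθ
  set P : ℝ := 2 ^ lacunaryExp K
  have : (W : ℝ) - lacunarySum K - √d ≤ 3 * (P ^ 4)⁻¹ := by linarith
  calc P * ((W : ℝ) - lacunarySum K - √d) ≤ P * (3 * (P ^ 4)⁻¹) :=
        mul_le_mul_of_nonneg_left this (by positivity)
    _ = 3 / P ^ 3 := by field_simp

theorem two_pow_mul_abs_embNeg_lt
    (hlo : (W : ℝ) - lacunarySum t - ((2 : ℝ) ^ lacunaryExp (t + 1))⁻¹ ≤ √d)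
    (hhi : √d < W - lacunarySum t) (hij : i < j) (hj : j ≤ t) {β : Zsqrtd d}
    (hneg : embNeg d β ^ 2 ≤ 4 * (embNeg d (lacunaryElt d W i) * embNeg d (lacunaryElt d W j))) :
    2 ^ lacunaryExp j * |embNeg d β| < 1 / 2 := by
  set P : ℝ := 2 ^ lacunaryExp j
  have hP : 16 ^ 4 ≤ P := (pow_le_pow_left₀ (by norm_num)
    (sixteen_le_two_pow_lacunaryExp i) 4).trans (two_pow_lacunaryExp_le_of_lt hij)
  have hαi : embNeg d (lacunaryElt d W i) ≤ 3 := (embNeg_lacunaryElt_le hlo (hij.le.trans hj)).trans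
    (div_le_self (by norm_num) (one_le_pow₀ (one_le_pow₀ one_le_two)))
  have hαj := embNeg_lacunaryElt_le hlo hj
  have hαj0 := embNeg_lacunaryElt_pos hhi hj
  have hsq : (P * embNeg d β) ^ 2 ≤ 36 / P := by
    calc (P * embNeg d β) ^ 2 ≤ P ^ 2 * (4 * (3 * (3 / P ^ 3))) := by
          rw [mul_pow]
          refine mul_le_mul_of_nonneg_left (hneg.trans ?_) (by positivity)
          gcongr
      _ = 36 / P := by field_simp; ring
  have : 36 / P < (1 / 2) ^ 2 := by
    rw [div_lt_iff₀ (by positivity)]; norm_num at hP ⊢; linarith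
  rw [← abs_of_pos (show 0 < P by positivity), ← abs_mul]
  exact abs_lt_of_sq_lt_sq (hsq.trans_lt this) (by norm_num)

theorem abs_im_lt_two_pow
    (hlo : (W : ℝ) - lacunarySum t - ((2 : ℝ) ^ lacunaryExp (t + 1))⁻¹ ≤ √d)
    (hhi : √d < W - lacunarySum t) (hW : 4 ≤ W) (hij : i < j) (hj : j ≤ t) {β : Zsqrtd d}
    (hpos : embPos d β ^ 2 ≤ 4 * (embPos d (lacunaryElt d W i) * embPos d (lacunaryElt d W j)))
    (hneg : embNeg d β ^ 2 ≤ 1) :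
    |(β.im : ℝ)| < 2 ^ lacunaryExp j := by
  set Pi : ℝ := 2 ^ lacunaryExp i
  set Pj : ℝ := 2 ^ lacunaryExp j
  have hPi : 16 ≤ Pi := sixteen_le_two_pow_lacunaryExp i
  have hPij : Pi ^ 4 ≤ Pj := two_pow_lacunaryExp_le_of_lt hij
  have hWR : (4 : ℝ) ≤ W := by exact_mod_cast hW
  have hθ : ((2 : ℝ) ^ lacunaryExp (t + 1))⁻¹ ≤ 1 :=
    inv_le_one_of_one_le₀ (one_le_pow₀ one_le_two)
  have hρ : (W : ℝ) ≤ 2 * √d := by linarith [lacunarySum_le_one t]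
  have hprod : embPos d (lacunaryElt d W i) * embPos d (lacunaryElt d W j)
      ≤ (2 * W * Pi) * (2 * W * Pj) :=
    mul_le_mul (embPos_lacunaryElt_le hhi) (embPos_lacunaryElt_le hhi)
      (embPos_lacunaryElt_pos hhi hj).le (by positivity)
  have hsplit : (β.im : ℝ) ^ 2 * (2 * √d) ^ 2 ≤ 2 * embPos d β ^ 2 + 2 * embNeg d β ^ 2 := by
    have : (β.im : ℝ) ^ 2 * (2 * √d) ^ 2 = (embPos d β - embNeg d β) ^ 2 := by
      unfold embPos embNeg; ring
    rw [this]; nlinarith [sq_nonneg (embPos d β + embNeg d β)]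
  by_contra! hb
  have hb2 : Pj ^ 2 ≤ (β.im : ℝ) ^ 2 := by
    rw [← sq_abs (β.im : ℝ)]; exact pow_le_pow_left₀ (by positivity) hb 2
  have hPj2 : 64 * (Pi * Pj) ≤ Pj ^ 2 := by
    have h64 : 64 * Pi ≤ Pj := by nlinarith [pow_le_pow_left₀ (by norm_num) hPi 3]
    rw [sq, ← mul_assoc]
    exact mul_le_mul_of_nonneg_right h64 (by positivity)
  have hW2 : (β.im : ℝ) ^ 2 * W ^ 2 ≤ (β.im : ℝ) ^ 2 * (2 * √d) ^ 2 :=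
    mul_le_mul_of_nonneg_left (pow_le_pow_left₀ (by positivity) hρ 2) (sq_nonneg _)
  have : 64 * (Pi * Pj) * W ^ 2 ≤ (β.im : ℝ) ^ 2 * W ^ 2 :=
    mul_le_mul_of_nonneg_right (hPj2.trans hb2) (sq_nonneg _)
  have hX : 1 ≤ Pi * Pj * (W : ℝ) ^ 2 :=
    one_le_mul_of_one_le_of_one_le (one_le_mul_of_one_le_of_one_le (by linarith)
      (by linarith [sixteen_le_two_pow_lacunaryExp j])) (by nlinarith)
  nlinarith

theorem isSeparated_lacunaryElt
    (hlo : (W : ℝ) - lacunarySum t - ((2 : ℝ) ^ lacunaryExp (t + 1))⁻¹ ≤ √d)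
    (hhi : √d < W - lacunarySum t) (hW : 4 ≤ W) (hij : i < j) (hj : j ≤ t) :
    IsSeparated d (lacunaryElt d W i) (lacunaryElt d W j) := by
  intro β hpos hneg
  set P : ℝ := 2 ^ lacunaryExp j
  have hP : 16 ≤ P := sixteen_le_two_pow_lacunaryExp j
  have hβ : P * |embNeg d β| < 1 / 2 := two_pow_mul_abs_embNeg_lt hlo hhi hij hj hneg
  have hβ1 : |embNeg d β| < 1 := by nlinarith [abs_nonneg (embNeg d β)]
  have hb : |(β.im : ℝ)| < P := abs_im_lt_two_pow hlo hhi hW hij hj hpos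
    (by nlinarith [sq_abs (embNeg d β), abs_nonneg (embNeg d β)])
  have hα : P * embNeg d (lacunaryElt d W j) < 1 / 2 := by
    calc P * embNeg d (lacunaryElt d W j) ≤ P * (3 / P ^ 3) :=
          mul_le_mul_of_nonneg_left (embNeg_lacunaryElt_le hlo hj) (by positivity)
      _ = 3 / P ^ 2 := by field_simp
      _ < 1 / 2 := by rw [div_lt_div_iff₀ (by positivity) two_pos]; nlinarith
  rcases eq_or_ne β.im 0 with him | him
  · have hre : |β.re| < 1 := by
      have : embNeg d β = β.re := by simp [embNeg, him]
      exact_mod_cast this ▸ hβ1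
    exact Zsqrtd.ext (Int.abs_lt_one_iff.1 hre) him
  have key := one_le_two_pow_mul_abs_sub_add (a := β.re)
    (odd_lacunaryElt_re (d := d) (W := W) (K := j) (by omega)) him hb √d
  have hαj : embNeg d (lacunaryElt d W j) = (lacunaryElt d W j).re - P * √d := by
    simp [embNeg, P]
  rw [← hαj, abs_of_pos (embNeg_lacunaryElt_pos hhi hj)] at key
  have : |(β.im : ℝ)| * embNeg d (lacunaryElt d W j) ≤ P * embNeg d (lacunaryElt d W j) :=
    mul_le_mul_of_nonneg_right hb.le (embNeg_lacunaryElt_pos hhi hj).le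
  unfold embNeg at hβ
  linarith

theorem le_rank_of_isUniversal
    (hlo : (W : ℝ) - lacunarySum t - ((2 : ℝ) ^ lacunaryExp (t + 1))⁻¹ ≤ √d)
    (hhi : √d < W - lacunarySum t) (hW : 4 ≤ W) (hd : 0 < d) {r : ℕ}
    {c : Fin r → Fin r → Zsqrtd d} (hc : IsUniversal d c) : t ≤ r := by
  have hsep : Pairwise fun k l : Fin t =>
      IsSeparated d (lacunaryElt d W k) (lacunaryElt d W l) := by
    intro k l hkl
    rcases lt_or_gt_of_ne (Fin.val_injective.ne hkl) with h | h
    · exact isSeparated_lacunaryElt hlo hhi hW h l.2.le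
    · exact (isSeparated_lacunaryElt hlo hhi hW h k.2.le).symm
  simpa using card_le_of_isUniversal hd hc
    (fun k : Fin t => ⟨embPos_lacunaryElt_pos hhi k.2.le, embNeg_lacunaryElt_pos hhi k.2.le⟩)
    hsep

end Window

theorem not_isSquare_add_of_isSquare {N x : ℤ} (hN : 0 < N) (hx : N ^ 2 < x)
    (h : IsSquare x) : ¬IsSquare (x + N) := by
  rintro ⟨v, hv⟩
  obtain ⟨u, rfl⟩ := h
  have hu : N < |u| := by nlinarith [abs_mul_abs_self u, abs_nonneg u]
  have hv' : |u| < |v| := by nlinarith [abs_mul_abs_self u, abs_mul_abs_self v, abs_nonneg v]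
  nlinarith [abs_mul_abs_self u, abs_mul_abs_self v]

theorem exists_modEq_not_isSquare_mem_Ico (m : ℤ) {n : ℕ} (hn : 0 < n) {L : ℝ}
    (hL : (n : ℝ) ^ 2 < L) :
    ∃ D : ℤ, L ≤ D ∧ (D : ℝ) < L + 2 * n + 1 ∧ D ≡ m [ZMOD n] ∧ ¬IsSquare D := by
  set x : ℤ := ⌈L⌉ + (m - ⌈L⌉) % n
  have hmod : x ≡ m [ZMOD n] := by
    simpa [x] using (Int.mod_modEq (m - ⌈L⌉) n).add_left ⌈L⌉
  have hr0 : 0 ≤ (m - ⌈L⌉) % n := Int.emod_nonneg _ (by omega)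
  have hrn : (m - ⌈L⌉) % n < n := Int.emod_lt_of_pos _ (by omega)
  have hxlo : L ≤ x := (Int.le_ceil L).trans (by exact_mod_cast (by omega : ⌈L⌉ ≤ x))
  have hxhi : (x : ℝ) + n < L + 2 * n + 1 := by
    have : (x : ℝ) < ⌈L⌉ + n := by exact_mod_cast (by omega : x < ⌈L⌉ + n)
    linarith [Int.ceil_lt_add_one L]
  by_cases hsq : IsSquare x
  · refine ⟨x + n, by push_cast; linarith, by push_cast; linarith, ?_, ?_⟩
    · exact (hmod.add_right (n : ℤ)).trans (by simp [Int.ModEq])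
    · exact not_isSquare_add_of_isSquare (by omega) (by exact_mod_cast hL.trans_le hxlo) hsq
  · exact ⟨x, hxlo, by linarith, hmod, hsq⟩

theorem exists_sqrt_mem_window (m : ℤ) {n : ℕ} (hn : 0 < n) (t : ℕ) :
    ∃ (D : ℤ) (W : ℕ), 2 ≤ D ∧ ¬IsSquare D ∧ D ≡ m [ZMOD n] ∧ 4 ≤ W ∧
      (W : ℝ) - lacunarySum t - ((2 : ℝ) ^ lacunaryExp (t + 1))⁻¹ ≤ √D ∧
      √D < W - lacunarySum t := by
  set P : ℝ := 2 ^ lacunaryExp (t + 1)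
  set W : ℕ := (3 * n + 2) * 2 ^ lacunaryExp (t + 1)
  set R : ℝ := W - lacunarySum t
  have hP : 16 ≤ P := sixteen_le_two_pow_lacunaryExp _
  have hθ : P⁻¹ ≤ 1 / 16 := by rw [inv_le_comm₀ (by positivity) (by norm_num)]; linarith
  have hθ0 : 0 < P⁻¹ := by positivity
  have hWθ : (W : ℝ) * P⁻¹ = 3 * n + 2 := by simp [W, P]
  have hn1 : (1 : ℝ) ≤ n := by exact_mod_cast hn
  have hW : 16 * (3 * n + 2) ≤ (W : ℝ) := by simp only [W]; push_cast; nlinarith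
  have hR : (W : ℝ) - 1 ≤ R := by linarith [lacunarySum_le_one t]
  have hnR : (n : ℝ) < R - P⁻¹ := by linarith
  have hgap : (R - P⁻¹) ^ 2 + 2 * n + 1 ≤ R ^ 2 := by
    have : ((W : ℝ) - 1) * P⁻¹ ≤ R * P⁻¹ := mul_le_mul_of_nonneg_right hR hθ0.le
    nlinarith
  obtain ⟨D, hDlo, hDhi, hmod, hsq⟩ := exists_modEq_not_isSquare_mem_Ico m hn
    (pow_lt_pow_left₀ hnR (Nat.cast_nonneg n) two_ne_zero)
  refine ⟨D, W, ?_, hsq, hmod, ?_, ?_, ?_⟩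
  · have : (1 : ℝ) < D := by nlinarith
    have : (1 : ℤ) < D := by exact_mod_cast this
    omega
  · have := Nat.one_le_two_pow (n := lacunaryExp (t + 1))
    simp only [W]; nlinarith
  · exact (Real.le_sqrt (by linarith) (by linarith [sq_nonneg (R - P⁻¹)])).2 hDlo
  · exact (Real.sqrt_lt' (by linarith)).2 (by linarith)

/-- For every integer `m`, positive integer `n` and integer `s`, there is a
non-square `D ≥ 2` with `D ≡ m (mod n)` such that every universal quadratic form
over `ℤ[√D]` has at least `s` variables. -/
theorem exists_large_rank_universal_mod (m : ℤ) (n : ℕ) (hn : 0 < n) (s : ℤ) :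
    ∃ D : ℤ, 2 ≤ D ∧ ¬ IsSquare D ∧ D ≡ m [ZMOD (n : ℤ)] ∧
      ∀ (r : ℕ) (c : Fin r → Fin r → Zsqrtd D), IsUniversal D c → s ≤ (r : ℤ) := by
  obtain ⟨D, W, hD, hsq, hmod, hW, hlo, hhi⟩ := exists_sqrt_mem_window m hn s.toNat
  refine ⟨D, hD, hsq, hmod, fun r c hc => ?_⟩
  have := le_rank_of_isUniversal hlo hhi hW (by omega) hc
  omega
end
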